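/- No-go theorem for reversible classical-quantum coupling (quantum case): Let d ≥ 2 and let R be a bijective map on classical-quantum states of ℂⁿ ⊗ ℂᵈ such that both R and R⁻¹ extend to trace-preserving positive linear maps sending CQ states to CQ states. Then R is non-signalling from the quantum to the classical system: for every classical state s and density matrices ρ, ρ′ on ℂᵈ, the classical marginals of R(s ⊗ ρ) and R(s ⊗ ρ′) coincide. -/

import Mathlib

/-!
Fix the classical state `s`. For each outcome `x` the map
`ψₓ σ = Tr₁ R⁻¹(|x⟩⟨x| ⊗ ⟨x|R(s ⊗ σ)|x⟩)` is positive, and since `R (s ⊗ σ)` is block diagonal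
and `R⁻¹` undoes `R`, the `ψₓ` sum to the identity: they form an instrument that does not disturb
the quantum system. Hence `0 ≤ ψₓ(vv*) ≤ vv*`, so every pure state is an eigenvector of `ψₓ`;
comparing eigenvalues along `u`, `w`, `u ± w` for orthogonal `u, w` forces `ψₓ = cₓ • id`.
The weight of the outcome `x` in `R (s ⊗ σ)` is `Tr ψₓ σ = cₓ`, whatever `σ` is.
-/

open Matrix Kronecker BigOperators
open scoped ComplexOrder

noncomputable section

/-- Partial trace over the second tensor factor. -/
def ptr2 {α β : Type*} [Fintype β] (M : Matrix (α × β) (α × β) ℂ) :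
    Matrix α α ℂ := fun i j => ∑ k, M (i, k) (j, k)

/-- Partial trace over the first tensor factor. -/
def ptr1 {α β : Type*} [Fintype α] (M : Matrix (α × β) (α × β) ℂ) :
    Matrix β β ℂ := fun i j => ∑ k, M (k, i) (k, j)

/-- The rank-one projector `|x⟩⟨x|` onto the `x`-th standard basis vector. -/
def ex {n : ℕ} (x : Fin n) : Matrix (Fin n) (Fin n) ℂ :=
  Matrix.single x x 1

/-- A density matrix: positive semidefinite with unit trace. -/
def IsDensity {α : Type*} [Fintype α] [DecidableEq α] (A : Matrix α α ℂ) : Prop :=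
  A.PosSemidef ∧ A.trace = 1

/-- A classical-quantum state on `ℂⁿ ⊗ ℂᵈ`. -/
def IsCQState (n d : ℕ) (M : Matrix (Fin n × Fin d) (Fin n × Fin d) ℂ) : Prop :=
  ∃ (p : Fin n → ℝ) (ρ : Fin n → Matrix (Fin d) (Fin d) ℂ),
    (∀ x, 0 ≤ p x) ∧ (∑ x, p x = 1) ∧ (∀ x, IsDensity (ρ x)) ∧
    M = ∑ x, (p x : ℂ) • (ex x ⊗ₖ ρ x)

namespace Matrix

variable {m : Type*}

lemma vecMulVec_star_mem_span [Fintype m] (x y : m → ℂ) :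
    vecMulVec x (star y) ∈ Submodule.span ℂ (Set.range fun v : m → ℂ => vecMulVec v (star v)) := by
  have polarization : vecMulVec x (star y) = (4⁻¹ : ℂ) •
      (vecMulVec (x + y) (star (x + y)) - vecMulVec (x - y) (star (x - y))
        + Complex.I • vecMulVec (x + Complex.I • y) (star (x + Complex.I • y))
        - Complex.I • vecMulVec (x - Complex.I • y) (star (x - Complex.I • y))) := by
    ext i j
    simp only [vecMulVec_apply, smul_apply, add_apply, sub_apply, Pi.add_apply, Pi.sub_apply,
      Pi.smul_apply, Pi.star_apply, star_add, star_sub, star_smul, smul_eq_mul,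
      Complex.star_def, Complex.conj_I]
    linear_combination
      (x i * (starRingEnd ℂ) (y j) - y i * (starRingEnd ℂ) (x j)) / 2 * Complex.I_mul_I
  have mem (v : m → ℂ) : vecMulVec v (star v) ∈
      Submodule.span ℂ (Set.range fun v : m → ℂ => vecMulVec v (star v)) :=
    Submodule.subset_span ⟨v, rfl⟩
  rw [polarization]
  exact Submodule.smul_mem _ _ <| Submodule.sub_mem _
    (Submodule.add_mem _ (Submodule.sub_mem _ (mem _) (mem _)) (Submodule.smul_mem _ _ (mem _)))
    (Submodule.smul_mem _ _ (mem _))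

lemma span_vecMulVec_self_star [Fintype m] [DecidableEq m] :
    Submodule.span ℂ (Set.range fun v : m → ℂ => vecMulVec v (star v)) = ⊤ := by
  refine eq_top_iff.mpr fun M _ => ?_
  rw [matrix_eq_sum_single M]
  refine Submodule.sum_mem _ fun i _ => Submodule.sum_mem _ fun j _ => ?_
  have hstar : star (Pi.single j (1 : ℂ) : m → ℂ) = Pi.single j 1 := by simp
  rw [← mul_one (M i j), ← smul_eq_mul, ← smul_single, single_eq_single_vecMulVec_single, ← hstar]
  exact Submodule.smul_mem _ _ (vecMulVec_star_mem_span _ _)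

lemma span_isDensity [Fintype m] [DecidableEq m] :
    Submodule.span ℂ {A : Matrix m m ℂ | IsDensity A} = ⊤ := by
  refine eq_top_iff.mpr <| span_vecMulVec_self_star.symm.le.trans <| Submodule.span_le.mpr ?_
  rintro _ ⟨v, rfl⟩
  dsimp only
  have hV := posSemidef_vecMulVec_self_star v
  set t := (vecMulVec v (star v)).trace
  by_cases ht : t = 0
  · rw [hV.trace_eq_zero_iff.mp ht]
    exact Submodule.zero_mem _
  · have hdens : IsDensity (t⁻¹ • vecMulVec v (star v)) :=
      ⟨hV.smul (inv_nonneg.mpr hV.trace_nonneg),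
        by rw [trace_smul, smul_eq_mul, inv_mul_cancel₀ ht]⟩
    rw [← smul_inv_smul₀ ht (vecMulVec v (star v))]
    exact Submodule.smul_mem _ _ (Submodule.subset_span hdens)

lemma PosSemidef.exists_eq_smul_vecMulVec_of_le [Fintype m] [DecidableEq m] {B : Matrix m m ℂ}
    {v : m → ℂ} (hB : B.PosSemidef) (hBv : (vecMulVec v (star v) - B).PosSemidef) :
    ∃ c : ℂ, B = c • vecMulVec v (star v) := by
  have hker (w : m → ℂ) (hw : star v ⬝ᵥ w = 0) : B *ᵥ w = 0 := by
    refine (hB.dotProduct_mulVec_zero_iff w).mp (le_antisymm ?_ (hB.dotProduct_mulVec_nonneg w))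
    simpa [sub_mulVec, vecMulVec_mulVec, hw] using hBv.dotProduct_mulVec_nonneg w
  set t := star v ⬝ᵥ v
  by_cases ht : t = 0
  · refine ⟨0, ext_iff_mulVec.mpr fun w => ?_⟩
    rw [hker w (by simp [dotProduct_star_self_eq_zero.mp ht]), zero_smul, zero_mulVec]
  -- `B` vanishes on `v⊥ = ker P`, so `B = B P = P B = P B P` for the projection `P` onto `ℂ v`.
  set P := t⁻¹ • vecMulVec v (star v)
  have hBP : B * P = B := by
    refine ext_iff_mulVec.mpr fun w => ?_
    rw [← mulVec_mulVec, ← sub_eq_zero, ← mulVec_sub]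
    refine hker _ ?_
    rw [smul_mulVec, vecMulVec_mulVec, op_smul_eq_smul, dotProduct_sub, dotProduct_smul,
      dotProduct_smul, smul_eq_mul, smul_eq_mul, mul_left_comm, inv_mul_cancel₀ ht, mul_one,
      sub_self]
  have hPB : P * B = B := by
    have hP : Pᴴ = P := by
      rw [conjTranspose_smul, conjTranspose_vecMulVec, star_star, star_inv₀, ← star_dotProduct]
    simpa [conjTranspose_mul, hP, hB.isHermitian.eq] using congrArg (·ᴴ) hBP
  have hVBV : vecMulVec v (star v) * B * vecMulVec v (star v)
      = (star v ᵥ* B ⬝ᵥ v) • vecMulVec v (star v) := by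
    rw [vecMulVec_mul, vecMulVec_mul_vecMulVec, vecMulVec_smul]
  refine ⟨t⁻¹ * t⁻¹ * (star v ᵥ* B ⬝ᵥ v), ?_⟩
  calc B = P * B * P := by rw [mul_assoc, hBP, hPB]
    _ = _ := by simp only [P, Matrix.smul_mul, Matrix.mul_smul, hVBV, smul_smul, mul_assoc]

lemma vecMulVec_add_star_add_add_vecMulVec_sub_star_sub (u w : m → ℂ) :
    vecMulVec (u + w) (star (u + w)) + vecMulVec (u - w) (star (u - w))
      = (2 : ℂ) • vecMulVec u (star u) + (2 : ℂ) • vecMulVec w (star w) := by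
  ext i j
  simp only [vecMulVec_apply, add_apply, smul_apply, Pi.add_apply, Pi.sub_apply, star_add,
    star_sub, smul_eq_mul]
  ring

lemma eq_of_map_vecMulVec_of_orthogonal [Fintype m] (ψ : Matrix m m ℂ →ₗ[ℂ] Matrix m m ℂ)
    {u w : m → ℂ} (hu : u ≠ 0) (hw : w ≠ 0) (huw : star u ⬝ᵥ w = 0) {a b p q : ℂ}
    (ha : ψ (vecMulVec u (star u)) = a • vecMulVec u (star u))
    (hb : ψ (vecMulVec w (star w)) = b • vecMulVec w (star w))
    (hp : ψ (vecMulVec (u + w) (star (u + w))) = p • vecMulVec (u + w) (star (u + w)))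
    (hq : ψ (vecMulVec (u - w) (star (u - w))) = q • vecMulVec (u - w) (star (u - w))) :
    b = a ∧ p = a := by
  have hsum : p • vecMulVec (u + w) (star (u + w)) + q • vecMulVec (u - w) (star (u - w))
      = (2 * a) • vecMulVec u (star u) + (2 * b) • vecMulVec w (star w) := by
    rw [← hp, ← hq, ← map_add, vecMulVec_add_star_add_add_vecMulVec_sub_star_sub, map_add,
      map_smul, map_smul, ha, hb, smul_smul, smul_smul]
  have hwu : star w ⬝ᵥ u = 0 := by rw [star_dotProduct, huw, star_zero]
  have hu' : star u ⬝ᵥ u ≠ 0 := fun h => hu (dotProduct_star_self_eq_zero.mp h)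
  have hw' : star w ⬝ᵥ w ≠ 0 := fun h => hw (dotProduct_star_self_eq_zero.mp h)
  have form (x y : m → ℂ) := congrArg (fun M => star x ⬝ᵥ M *ᵥ y) hsum
  have huu := form u u
  have hww := form w w
  have huw' := form u w
  simp only [add_mulVec, smul_mulVec, vecMulVec_mulVec, op_smul_eq_smul, star_add, star_sub,
    dotProduct_add, dotProduct_smul, add_dotProduct, sub_dotProduct, dotProduct_sub, huw, hwu,
    smul_eq_mul] at huu hww huw'
  have h1 : p + q = 2 * a := mul_right_cancel₀ (mul_ne_zero hu' hu') (by linear_combination huu)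
  have h2 : p + q = 2 * b := mul_right_cancel₀ (mul_ne_zero hw' hw') (by linear_combination hww)
  have h3 : p = q := mul_right_cancel₀ (mul_ne_zero hw' hu') (by linear_combination huw')
  exact ⟨by linear_combination (h1 - h2) / 2, by linear_combination (h1 + h3) / 2⟩

lemma exists_eq_smul_id_of_forall_map_vecMulVec [Fintype m] [DecidableEq m]
    (ψ : Matrix m m ℂ →ₗ[ℂ] Matrix m m ℂ)
    (h : ∀ v : m → ℂ, ∃ c : ℂ, ψ (vecMulVec v (star v)) = c • vecMulVec v (star v)) :
    ∃ c : ℂ, ψ = c • LinearMap.id := by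
  rcases isEmpty_or_nonempty m with _ | ⟨⟨i₀⟩⟩
  · exact ⟨0, Subsingleton.elim _ _⟩
  choose μ hμ using h
  set e : m → ℂ := Pi.single i₀ 1
  have he : e ≠ 0 := by simp [e]
  set c := μ e
  have orthogonal (u w : m → ℂ) (hu : u ≠ 0) (huw : star u ⬝ᵥ w = 0)
      (hc : ψ (vecMulVec u (star u)) = c • vecMulVec u (star u)) :
      ψ (vecMulVec w (star w)) = c • vecMulVec w (star w) ∧
        ψ (vecMulVec (u + w) (star (u + w))) = c • vecMulVec (u + w) (star (u + w)) := by
    rcases eq_or_ne w 0 with rfl | hw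
    · simp [hc]
    obtain ⟨hb, hp⟩ := eq_of_map_vecMulVec_of_orthogonal ψ hu hw huw hc (hμ w) (hμ _) (hμ _)
    rw [hμ, hμ, hb, hp]
    exact ⟨rfl, rfl⟩
  have scale (a : ℂ) :
      ψ (vecMulVec (a • e) (star (a • e))) = c • vecMulVec (a • e) (star (a • e)) := by
    rw [smul_vecMulVec, star_smul, vecMulVec_smul, map_smul, map_smul, hμ, smul_comm c,
      smul_comm c]
  have hV (v : m → ℂ) : ψ (vecMulVec v (star v)) = c • vecMulVec v (star v) := by
    have hw : star e ⬝ᵥ (v - v i₀ • e) = 0 := by simp [e, dotProduct_sub]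
    rcases eq_or_ne (v i₀) 0 with ha | ha
    · simpa [ha] using (orthogonal e _ he hw (hμ e)).1
    · have hu : star (v i₀ • e) ⬝ᵥ (v - v i₀ • e) = 0 := by
        rw [star_smul, smul_dotProduct, hw, smul_zero]
      simpa using (orthogonal _ _ (smul_ne_zero ha he) hu (scale _)).2
  exact ⟨c, LinearMap.ext_on_range span_vecMulVec_self_star hV⟩

lemma exists_eq_smul_id_of_sum_eq_id {ι : Type*} [Fintype ι] [Fintype m] [DecidableEq m]
    (ψ : ι → Matrix m m ℂ →ₗ[ℂ] Matrix m m ℂ) (hψ : ∀ i A, A.PosSemidef → (ψ i A).PosSemidef)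
    (hsum : ∑ i, ψ i = LinearMap.id) (i : ι) : ∃ c : ℂ, ψ i = c • LinearMap.id := by
  classical
  refine exists_eq_smul_id_of_forall_map_vecMulVec (ψ i) fun v => ?_
  have hV := posSemidef_vecMulVec_self_star v
  refine (hψ i _ hV).exists_eq_smul_vecMulVec_of_le ?_
  have hrest : vecMulVec v (star v) - ψ i (vecMulVec v (star v))
      = ∑ j ∈ Finset.univ.erase i, ψ j (vecMulVec v (star v)) := by
    rw [sub_eq_iff_eq_add', Finset.add_sum_erase _ (fun j => ψ j (vecMulVec v (star v)))
      (Finset.mem_univ i), ← LinearMap.sum_apply, hsum, LinearMap.id_apply]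
  rw [hrest]
  exact posSemidef_sum _ fun j _ => hψ j _ hV

lemma sum_smul_single_self_one [Fintype m] [DecidableEq m] (q : m → ℂ) :
    ∑ x, q x • single x x (1 : ℂ) = diagonal q := by
  ext i j
  rcases eq_or_ne i j with rfl | h
  · simp [Matrix.sum_apply, single_apply]
  · simp only [Matrix.sum_apply, Matrix.smul_apply, diagonal_apply_ne _ h]
    exact Finset.sum_eq_zero fun x _ => by
      rw [single_apply, if_neg fun hx => h (hx.1.symm.trans hx.2), smul_zero]

lemma sum_kronecker {ι n : Type*} [Fintype ι] (A : ι → Matrix m m ℂ) (B : Matrix n n ℂ) :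
    (∑ x, A x) ⊗ₖ B = ∑ x, A x ⊗ₖ B := by
  ext
  simp [Matrix.sum_apply, Finset.sum_mul]

end Matrix

section PartialTrace

variable {α β : Type*}

def diagBlock (x : α) : Matrix (α × β) (α × β) ℂ →ₗ[ℂ] Matrix β β ℂ where
  toFun M := M.submatrix (Prod.mk x) (Prod.mk x)
  map_add' _ _ := rfl
  map_smul' _ _ := rfl

@[simp]
lemma diagBlock_apply (x : α) (M : Matrix (α × β) (α × β) ℂ) :
    diagBlock x M = M.submatrix (Prod.mk x) (Prod.mk x) := rfl

lemma ptr2_apply_self [Fintype β] (M : Matrix (α × β) (α × β) ℂ) (x : α) :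
    ptr2 M x x = (diagBlock x M).trace := rfl

lemma ptr2_apply_of_ne [Fintype β] {M : Matrix (α × β) (α × β) ℂ}
    (hM : ∀ a b : α × β, a.1 ≠ b.1 → M a b = 0) {x y : α} (hxy : x ≠ y) : ptr2 M x y = 0 :=
  Finset.sum_eq_zero fun k _ => hM (x, k) (y, k) hxy

lemma sum_single_kronecker_diagBlock [Fintype α] [DecidableEq α] {M : Matrix (α × β) (α × β) ℂ}
    (hM : ∀ a b : α × β, a.1 ≠ b.1 → M a b = 0) :
    ∑ x, single x x 1 ⊗ₖ diagBlock x M = M := by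
  ext ⟨x, i⟩ ⟨y, j⟩
  rcases eq_or_ne x y with rfl | hxy
  · simp [Matrix.sum_apply, single_apply]
  · rw [hM _ _ hxy]
    simp only [Matrix.sum_apply, kronecker_apply, single_apply, diagBlock_apply, submatrix_apply]
    exact Finset.sum_eq_zero fun z _ => by
      rw [if_neg fun h => hxy (h.1.symm.trans h.2), zero_mul]

variable [Fintype α]

def ptr1LinearMap : Matrix (α × β) (α × β) ℂ →ₗ[ℂ] Matrix β β ℂ := ∑ x, diagBlock x

lemma ptr1LinearMap_apply (M : Matrix (α × β) (α × β) ℂ) : ptr1LinearMap M = ptr1 M := by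
  ext i j
  simp [ptr1LinearMap, ptr1, Matrix.sum_apply]

lemma Matrix.PosSemidef.ptr1 [Fintype β] {M : Matrix (α × β) (α × β) ℂ} (hM : M.PosSemidef) :
    (ptr1 M).PosSemidef := by
  rw [← ptr1LinearMap_apply, ptr1LinearMap, LinearMap.sum_apply]
  exact posSemidef_sum _ fun x _ => hM.submatrix _

lemma trace_ptr1 [Fintype β] (M : Matrix (α × β) (α × β) ℂ) : (ptr1 M).trace = M.trace := by
  simp only [trace, diag, ptr1, Fintype.sum_prod_type]
  exact Finset.sum_comm

lemma ptr1_kronecker (A : Matrix α α ℂ) (B : Matrix β β ℂ) : ptr1 (A ⊗ₖ B) = A.trace • B := by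
  ext i j
  simp [ptr1, trace, Finset.sum_mul]

end PartialTrace

lemma IsCQState.apply_eq_zero_of_fst_ne {n d : ℕ} {M : Matrix (Fin n × Fin d) (Fin n × Fin d) ℂ}
    (hM : IsCQState n d M) (a b : Fin n × Fin d) (hab : a.1 ≠ b.1) : M a b = 0 := by
  obtain ⟨p, ρ, -, -, -, rfl⟩ := hM
  obtain ⟨x, i⟩ := a
  obtain ⟨y, j⟩ := b
  simp only [Matrix.sum_apply, Matrix.smul_apply, ex, kronecker_apply, single_apply]
  exact Finset.sum_eq_zero fun z _ => by
    rw [if_neg fun h => hab (h.1.symm.trans h.2), zero_mul, smul_zero]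

section Instrument

variable {α β : Type*} [Fintype α] [DecidableEq α]
  {R Rinv : Matrix (α × β) (α × β) ℂ →ₗ[ℂ] Matrix (α × β) (α × β) ℂ} {s : Matrix α α ℂ}

variable (R Rinv s) in
def instrument (x : α) : Matrix β β ℂ →ₗ[ℂ] Matrix β β ℂ :=
  ptr1LinearMap ∘ₗ Rinv ∘ₗ kroneckerBilinear (single x x 1) ∘ₗ diagBlock x ∘ₗ R ∘ₗ
    kroneckerBilinear s

lemma instrument_apply (x : α) (A : Matrix β β ℂ) :
    instrument R Rinv s x A = ptr1 (Rinv (single x x 1 ⊗ₖ diagBlock x (R (s ⊗ₖ A)))) :=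
  ptr1LinearMap_apply _

lemma posSemidef_instrument [Fintype β] (hR : ∀ M, M.PosSemidef → (R M).PosSemidef)
    (hRinv : ∀ M, M.PosSemidef → (Rinv M).PosSemidef) (hs : s.PosSemidef) (x : α)
    {A : Matrix β β ℂ} (hA : A.PosSemidef) : (instrument R Rinv s x A).PosSemidef := by
  rw [instrument_apply]
  have hx : (single x x (1 : ℂ)).PosSemidef := by
    rw [← diagonal_single]
    exact PosSemidef.diagonal (Pi.single_nonneg.mpr zero_le_one)
  exact (hRinv _ (hx.kronecker ((hR _ (hs.kronecker hA)).submatrix _))).ptr1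

lemma trace_instrument [Fintype β] (hRinv : ∀ M, (Rinv M).trace = M.trace) (x : α)
    (A : Matrix β β ℂ) :
    (instrument R Rinv s x A).trace = ptr2 (R (s ⊗ₖ A)) x x := by
  rw [instrument_apply, trace_ptr1, hRinv, trace_kronecker, trace_single_eq_same, one_mul,
    ptr2_apply_self]

lemma sum_instrument_eq_id [Fintype β] [DecidableEq β] (hs : s.trace = 1)
    (h : ∀ A : Matrix β β ℂ, IsDensity A →
      (∀ a b : α × β, a.1 ≠ b.1 → R (s ⊗ₖ A) a b = 0) ∧ Rinv (R (s ⊗ₖ A)) = s ⊗ₖ A) :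
    ∑ x, instrument R Rinv s x = LinearMap.id := by
  refine LinearMap.ext_on span_isDensity fun A hA => ?_
  obtain ⟨hblock, hinv⟩ := h A hA
  rw [LinearMap.sum_apply, LinearMap.id_apply]
  simp only [instrument_apply, ← ptr1LinearMap_apply, ← map_sum,
    sum_single_kronecker_diagBlock hblock, hinv]
  rw [ptr1LinearMap_apply, ptr1_kronecker, hs, one_smul]

end Instrument

theorem stmt6_general (n d : ℕ)
    (R Rinv : Matrix (Fin n × Fin d) (Fin n × Fin d) ℂ →ₗ[ℂ]
      Matrix (Fin n × Fin d) (Fin n × Fin d) ℂ)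
    (hTP_Rinv : ∀ M, (Rinv M).trace = M.trace)
    (hPos_R : ∀ M, M.PosSemidef → (R M).PosSemidef)
    (hPos_Rinv : ∀ M, M.PosSemidef → (Rinv M).PosSemidef)
    (hCQ_R : ∀ M, IsCQState n d M → IsCQState n d (R M))
    (hInv : ∀ M, IsCQState n d M → Rinv (R M) = M)
    (p : Fin n → ℝ) (hp0 : ∀ x, 0 ≤ p x) (hp1 : ∑ x, p x = 1)
    (ρ ρ' : Matrix (Fin d) (Fin d) ℂ) (hρ : IsDensity ρ) (hρ' : IsDensity ρ') :
    ptr2 (R ((∑ x, (p x : ℂ) • ex x) ⊗ₖ ρ)) =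
      ptr2 (R ((∑ x, (p x : ℂ) • ex x) ⊗ₖ ρ')) := by
  set s := ∑ x, (p x : ℂ) • ex x
  have hs_diag : s = diagonal fun x => (p x : ℂ) := sum_smul_single_self_one _
  have hs : s.PosSemidef := by
    rw [hs_diag, posSemidef_diagonal_iff]
    exact fun x => Complex.zero_le_real.mpr (hp0 x)
  have hs_trace : s.trace = 1 := by
    rw [hs_diag, trace_diagonal, ← Complex.ofReal_sum, hp1, Complex.ofReal_one]
  have hcq (A) (hA : IsDensity A) : IsCQState n d (s ⊗ₖ A) :=
    ⟨p, fun _ => A, hp0, hp1, fun _ => hA, by simp only [s, sum_kronecker, smul_kronecker]⟩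
  have hsum := sum_instrument_eq_id hs_trace fun A hA =>
    ⟨(hCQ_R _ (hcq A hA)).apply_eq_zero_of_fst_ne, hInv _ (hcq A hA)⟩
  choose c hc using exists_eq_smul_id_of_sum_eq_id _
    (fun x _ => posSemidef_instrument hPos_R hPos_Rinv hs x) hsum
  have marginal (σ) (hσ : IsDensity σ) : ptr2 (R (s ⊗ₖ σ)) = diagonal c := by
    ext x y
    rcases eq_or_ne x y with rfl | hxy
    · rw [← trace_instrument hTP_Rinv, hc, LinearMap.smul_apply, LinearMap.id_apply, trace_smul,
        hσ.2, smul_eq_mul, mul_one, diagonal_apply_eq]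
    · rw [ptr2_apply_of_ne (hCQ_R _ (hcq σ hσ)).apply_eq_zero_of_fst_ne hxy,
        diagonal_apply_ne _ hxy]
  rw [marginal ρ hρ, marginal ρ' hρ']

/-- no-go theorem for reversible classical-quantum coupling, quantum case:
let `d ≥ 2` and let `R` be a bijective map on classical-quantum states of `ℂⁿ ⊗ ℂᵈ` such
that both `R` and `R⁻¹` extend to trace-preserving positive linear maps sending CQ states
to CQ states. Then `R` is non-signalling from the quantum to the classical system: for
every classical state `s` and density matrices `ρ, ρ'`, the classical marginals of
`R(s ⊗ ρ)` and `R(s ⊗ ρ')` coincide. -/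
theorem stmt6 (n d : ℕ) (hd : 2 ≤ d)
    (R Rinv : Matrix (Fin n × Fin d) (Fin n × Fin d) ℂ →ₗ[ℂ]
      Matrix (Fin n × Fin d) (Fin n × Fin d) ℂ)
    (hTP_R : ∀ M, (R M).trace = M.trace)
    (hTP_Rinv : ∀ M, (Rinv M).trace = M.trace)
    (hPos_R : ∀ M, M.PosSemidef → (R M).PosSemidef)
    (hPos_Rinv : ∀ M, M.PosSemidef → (Rinv M).PosSemidef)
    (hCQ_R : ∀ M, IsCQState n d M → IsCQState n d (R M))
    (hCQ_Rinv : ∀ M, IsCQState n d M → IsCQState n d (Rinv M))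
    (hInv : ∀ M, IsCQState n d M → Rinv (R M) = M)
    (hInv' : ∀ M, IsCQState n d M → R (Rinv M) = M)
    (p : Fin n → ℝ) (hp0 : ∀ x, 0 ≤ p x) (hp1 : ∑ x, p x = 1)
    (ρ ρ' : Matrix (Fin d) (Fin d) ℂ) (hρ : IsDensity ρ) (hρ' : IsDensity ρ') :
    ptr2 (R ((∑ x, (p x : ℂ) • ex x) ⊗ₖ ρ)) =
      ptr2 (R ((∑ x, (p x : ℂ) • ex x) ⊗ₖ ρ')) :=
  stmt6_general n d R Rinv hTP_Rinv hPos_R hPos_Rinv hCQ_R hInv p hp0 hp1 ρ ρ' hρ hρ'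

end
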